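/- Let g ∈ GL(d,ℝ). If the gap distance between the direction of maximum growth u(g) and the hyperplane of least growth s(g) satisfies d(u(g), s(g)) > 2√(a₂(g)/a₁(g)), then d(u(g), s(g))/2 ≤ ρ(g)/‖g‖, where ρ(g) is the spectral radius of g. -/

import Mathlib

open scoped RealInnerProductSpace
open Filter

noncomputable section

/-- Euclidean space `ℝ^d`. -/
abbrev E (d : ℕ) := EuclideanSpace ℝ (Fin d)

/-- The operator norm of a `d × d` real matrix, acting on Euclidean space. -/
def opNorm {d : ℕ} (g : Matrix (Fin d) (Fin d) ℝ) : ℝ :=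
  ‖(Matrix.toEuclideanLin g).toContinuousLinearMap‖

/-- The action of a matrix on a Euclidean vector. -/
def act {d : ℕ} (g : Matrix (Fin d) (Fin d) ℝ) (v : E d) : E d :=
  Matrix.toEuclideanLin g v

/-- The norm of `v ∧ w` in `Λ² ℝ^d`. -/
def wedgeNorm {d : ℕ} (v w : E d) : ℝ :=
  Real.sqrt (‖v‖ ^ 2 * ‖w‖ ^ 2 - ⟪v, w⟫ ^ 2)

/-- The gap distance `d(v̄, w̄) = ‖v ∧ w‖ / (‖v‖ ‖w‖)` on projective space. -/
def gapDist {d : ℕ} (v w : E d) : ℝ := wedgeNorm v w / (‖v‖ * ‖w‖)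

/-- The operator norm of `Λ² g`, computed on the decomposable generators coming from
orthonormal pairs. -/
def lam2Norm {d : ℕ} (g : Matrix (Fin d) (Fin d) ℝ) : ℝ :=
  sSup {r | ∃ v w : E d, ‖v‖ = 1 ∧ ‖w‖ = 1 ∧ ⟪v, w⟫ = 0 ∧
    r = wedgeNorm (act g v) (act g w)}

/-- Spectral radius: the maximal absolute value of the complex eigenvalues. -/
def specRad {d : ℕ} (g : Matrix (Fin d) (Fin d) ℝ) : ℝ :=
  sSup ((fun z : ℂ => ‖z‖) '' spectrum ℂ (g.map (algebraMap ℝ ℂ)))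

/-- Singular value decomposition data: `g = L Δ R` with `L, R` orthogonal and
`Δ = diagonal a`, the `a i` positive and in decreasing order (so `a i = a_{i+1}(g)`). -/
structure SVD {d : ℕ} (g : Matrix (Fin d) (Fin d) ℝ) (L : Matrix (Fin d) (Fin d) ℝ)
    (a : Fin d → ℝ) (R : Matrix (Fin d) (Fin d) ℝ) : Prop where
  orthL : L * L.transpose = 1
  orthR : R * R.transpose = 1
  anti : Antitone a
  pos : ∀ i, 0 < a i
  eq : g = L * Matrix.diagonal a * R

/-- The `i`-th standard basis vector of `ℝ^d`. -/
def stdVec {d : ℕ} (i : Fin d) : E d := EuclideanSpace.single i 1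

/-!
Let `u = L e₁`, `n = Rᵀ e₁` (so `s(g) = n⊥`) and `c = ⟪u, n⟫`. The vector `u - c n ∈ n⊥` is at
distance `|c|` from `u`, so the hypothesis gives `4 a₂ < a₁ c²`. Since `⟪g v, u⟫ = a₁ ⟪v, n⟫`
while `g` stretches `n⊥` by at most `a₂`, the cone `{w | (1 - c²/4) ‖w‖² ≤ ⟪w, u⟫²}` is mapped
into itself by `g`, and on it `|⟪w, n⟫| ≥ |c| ‖w‖ / 2`, so `g` stretches it by at least
`a₁ |c| / 2`. Thus `‖gᵏ u‖ ≥ (a₁ |c| / 2)ᵏ`, and Gelfand's formula gives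
`ρ(g) ≥ a₁ |c| / 2 = ‖g‖ |c| / 2`.
-/

open Matrix

section Act

variable {d : ℕ}

lemma act_pow (g : Matrix (Fin d) (Fin d) ℝ) (k : ℕ) (v : E d) :
    act (g ^ k) v = (toEuclideanLin g ^ k) v := by
  rw [act, toLpLin_pow]

lemma act_mul (g h : Matrix (Fin d) (Fin d) ℝ) (v : E d) : act (g * h) v = act g (act h v) := by
  rw [act, toLpLin_mul]; rfl

lemma act_one (v : E d) : act 1 v = v := by simp [act]

lemma inner_act_left (g : Matrix (Fin d) (Fin d) ℝ) (x y : E d) :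
    ⟪act g x, y⟫ = ⟪x, act gᵀ y⟫ := by
  rw [act, act, ← conjTranspose_eq_transpose_of_trivial, toEuclideanLin_conjTranspose_eq_adjoint,
    LinearMap.adjoint_inner_right]

lemma inner_act_act_of_orthogonal {Q : Matrix (Fin d) (Fin d) ℝ} (hQ : Qᵀ * Q = 1) (x y : E d) :
    ⟪act Q x, act Q y⟫ = ⟪x, y⟫ := by
  rw [inner_act_left, ← act_mul, hQ, act_one]

lemma norm_act_of_orthogonal {Q : Matrix (Fin d) (Fin d) ℝ} (hQ : Qᵀ * Q = 1) (x : E d) :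
    ‖act Q x‖ = ‖x‖ := by
  rw [norm_eq_sqrt_real_inner, inner_act_act_of_orthogonal hQ, ← norm_eq_sqrt_real_inner]

lemma inner_stdVec (x : E d) (i : Fin d) : ⟪x, stdVec i⟫ = x i := by
  simp [stdVec, EuclideanSpace.inner_single_right]

lemma norm_stdVec (i : Fin d) : ‖stdVec i‖ = 1 := by simp [stdVec]

lemma norm_sq_eq_sum (x : E d) : ‖x‖ ^ 2 = ∑ i, x i ^ 2 := by
  simp [EuclideanSpace.norm_sq_eq]

lemma inner_act_transpose_stdVec (g : Matrix (Fin d) (Fin d) ℝ) (v : E d) (i : Fin d) :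
    ⟪v, act gᵀ (stdVec i)⟫ = act g v i := by
  rw [← inner_act_left, inner_stdVec]

lemma act_diagonal_apply (a : Fin d → ℝ) (v : E d) (i : Fin d) :
    act (diagonal a) v i = a i * v i := by
  simp [act, mulVec_diagonal]

end Act

namespace SVD

variable {d : ℕ} {g L R : Matrix (Fin d) (Fin d) ℝ} {a : Fin d → ℝ}

lemma transpose_L_mul_L (h : SVD g L a R) : Lᵀ * L = 1 := mul_eq_one_comm.mp h.orthL

lemma norm_act_L_stdVec (h : SVD g L a R) (i : Fin d) : ‖act L (stdVec i)‖ = 1 := by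
  rw [norm_act_of_orthogonal h.transpose_L_mul_L, norm_stdVec]

lemma norm_act_R_transpose_stdVec (h : SVD g L a R) (i : Fin d) : ‖act Rᵀ (stdVec i)‖ = 1 := by
  rw [norm_act_of_orthogonal (by rw [transpose_transpose]; exact h.orthR), norm_stdVec]

lemma act_eq (h : SVD g L a R) (v : E d) : act g v = act L (act (diagonal a) (act R v)) := by
  rw [← act_mul, ← act_mul, ← h.eq]

lemma inner_act_act_L_stdVec (h : SVD g L a R) (i : Fin d) (v : E d) :
    ⟪act g v, act L (stdVec i)⟫ = a i * ⟪v, act Rᵀ (stdVec i)⟫ := by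
  rw [h.act_eq, inner_act_act_of_orthogonal h.transpose_L_mul_L, inner_stdVec,
    inner_act_transpose_stdVec, act_diagonal_apply]

lemma norm_act_sq_le (h : SVD g L a R) {i₀ i₁ : Fin d} (hi₁ : ∀ i ≠ i₀, a i ≤ a i₁) (v : E d) :
    ‖act g v‖ ^ 2 ≤ a i₀ ^ 2 * ⟪v, act Rᵀ (stdVec i₀)⟫ ^ 2 +
      a i₁ ^ 2 * (‖v‖ ^ 2 - ⟪v, act Rᵀ (stdVec i₀)⟫ ^ 2) := by
  set w := act R v
  have hv : ‖v‖ ^ 2 = ∑ i, w i ^ 2 := by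
    rw [← norm_act_of_orthogonal (mul_eq_one_comm.mp h.orthR) v, norm_sq_eq_sum]
  rw [h.act_eq, norm_act_of_orthogonal h.transpose_L_mul_L, norm_sq_eq_sum,
    inner_act_transpose_stdVec, hv, ← Finset.add_sum_erase _ _ (Finset.mem_univ i₀),
    ← Finset.add_sum_erase _ _ (Finset.mem_univ i₀), act_diagonal_apply, add_sub_cancel_left,
    mul_pow, Finset.mul_sum, add_le_add_iff_left]
  refine Finset.sum_le_sum fun i hi => ?_
  rw [act_diagonal_apply, mul_pow]
  gcongr
  · exact (h.pos i).le
  · exact hi₁ i (Finset.ne_of_mem_erase hi)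

lemma norm_act_le (h : SVD g L a R) {i₀ : Fin d} (hi₀ : ∀ i, a i ≤ a i₀) (v : E d) :
    ‖act g v‖ ≤ a i₀ * ‖v‖ := by
  refine le_of_sq_le_sq ?_ (mul_nonneg (h.pos i₀).le (norm_nonneg v))
  calc ‖act g v‖ ^ 2 ≤ _ := h.norm_act_sq_le (fun i _ => hi₀ i) v
    _ = (a i₀ * ‖v‖) ^ 2 := by ring

lemma opNorm_eq (h : SVD g L a R) {i₀ : Fin d} (hi₀ : ∀ i, a i ≤ a i₀) : opNorm g = a i₀ := by
  refine le_antisymm (ContinuousLinearMap.opNorm_le_bound _ (h.pos i₀).le (h.norm_act_le hi₀)) ?_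
  set n := act Rᵀ (stdVec i₀)
  calc a i₀ = ⟪act g n, act L (stdVec i₀)⟫ := by
        rw [h.inner_act_act_L_stdVec, real_inner_self_eq_norm_sq, h.norm_act_R_transpose_stdVec,
          one_pow, mul_one]
    _ ≤ ‖act g n‖ := by
        simpa [h.norm_act_L_stdVec] using real_inner_le_norm (act g n) (act L (stdVec i₀))
    _ ≤ opNorm g * ‖n‖ := (toEuclideanLin g).toContinuousLinearMap.le_opNorm n
    _ = opNorm g := by rw [h.norm_act_R_transpose_stdVec, mul_one]

end SVD

section Cone

variable {F : Type*} [NormedAddCommGroup F] [InnerProductSpace ℝ F]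

lemma one_add_sqrt_one_sub_sq_le {b : ℝ} (hb : b ^ 2 ≤ 1) :
    1 + √(1 - b ^ 2) ≤ 2 * √(1 - b ^ 2 / 4) := by
  have hs : √(1 - b ^ 2) ≤ 1 := Real.sqrt_le_one.mpr (by linarith [sq_nonneg b])
  have hs2 : √(1 - b ^ 2) ^ 2 = 1 - b ^ 2 := Real.sq_sqrt (by linarith)
  rw [← div_le_iff₀' two_pos]
  refine Real.le_sqrt_of_sq_le ?_
  nlinarith [Real.sqrt_nonneg (1 - b ^ 2)]

lemma norm_sub_inner_smul_sq {u : F} (hu : ‖u‖ = 1) (w : F) :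
    ‖w - ⟪w, u⟫ • u‖ ^ 2 = ‖w‖ ^ 2 - ⟪w, u⟫ ^ 2 := by
  rw [norm_sub_sq_real, real_inner_smul_right, norm_smul, Real.norm_eq_abs, mul_pow, sq_abs, hu]
  ring

lemma abs_inner_sub_inner_mul_inner_le {u : F} (hu : ‖u‖ = 1) (w n : F) :
    |⟪w, n⟫ - ⟪w, u⟫ * ⟪u, n⟫| ≤ √(‖w‖ ^ 2 - ⟪w, u⟫ ^ 2) * √(‖n‖ ^ 2 - ⟪u, n⟫ ^ 2) := by
  have hinner : ⟪w - ⟪w, u⟫ • u, n - ⟪u, n⟫ • u⟫ = ⟪w, n⟫ - ⟪w, u⟫ * ⟪u, n⟫ := by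
    rw [inner_sub_left, inner_sub_right, inner_sub_right, real_inner_smul_left,
      real_inner_smul_left, real_inner_smul_right, real_inner_smul_right, real_inner_self_eq_norm_sq, hu,
      real_inner_comm u w]
    ring
  rw [← hinner, ← norm_sub_inner_smul_sq hu, real_inner_comm n u, ← norm_sub_inner_smul_sq hu,
    Real.sqrt_sq (norm_nonneg _), Real.sqrt_sq (norm_nonneg _)]
  exact abs_real_inner_le_norm _ _

lemma abs_inner_le_one {u n : F} (hu : ‖u‖ = 1) (hn : ‖n‖ = 1) : |⟪u, n⟫| ≤ 1 := by
  simpa [hu, hn] using abs_real_inner_le_norm u n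

def coneAround (u : F) (c : ℝ) : Set F := {w | (1 - c ^ 2 / 4) * ‖w‖ ^ 2 ≤ ⟪w, u⟫ ^ 2}

lemma mem_coneAround_self {u : F} (hu : ‖u‖ = 1) (c : ℝ) : u ∈ coneAround u c := by
  change (1 - c ^ 2 / 4) * ‖u‖ ^ 2 ≤ ⟪u, u⟫ ^ 2
  rw [real_inner_self_eq_norm_sq, hu]
  nlinarith [sq_nonneg c]

lemma abs_inner_mul_norm_le_of_mem_coneAround {u n w : F} (hu : ‖u‖ = 1) (hn : ‖n‖ = 1)
    (hw : w ∈ coneAround u ⟪u, n⟫) :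
    |⟪u, n⟫| / 2 * ‖w‖ ≤ |⟪w, n⟫| := by
  set c := ⟪u, n⟫
  set t := ⟪w, u⟫
  replace hw : (1 - c ^ 2 / 4) * ‖w‖ ^ 2 ≤ t ^ 2 := hw
  have hc : c ^ 2 ≤ 1 := (sq_le_one_iff_abs_le_one c).mpr (abs_inner_le_one hu hn)
  have hperp : √(‖w‖ ^ 2 - t ^ 2) ≤ |c| / 2 * ‖w‖ :=
    Real.sqrt_le_iff.mpr ⟨by positivity, by nlinarith [sq_abs c]⟩
  have hpar : √(1 - c ^ 2 / 4) * ‖w‖ ≤ |t| := by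
    have := Real.sqrt_le_sqrt hw
    rwa [Real.sqrt_mul' _ (sq_nonneg _), Real.sqrt_sq (norm_nonneg w), Real.sqrt_sq_eq_abs] at this
  have hcs := abs_inner_sub_inner_mul_inner_le hu w n
  rw [hn, one_pow] at hcs
  have hkey := one_add_sqrt_one_sub_sq_le hc
  calc |c| / 2 * ‖w‖ ≤ |c| * ‖w‖ * (√(1 - c ^ 2 / 4) - √(1 - c ^ 2) / 2) := by
        rw [mul_comm (|c| / 2)]
        nlinarith [mul_nonneg (abs_nonneg c) (norm_nonneg w)]
    _ = √(1 - c ^ 2 / 4) * ‖w‖ * |c| - |c| / 2 * ‖w‖ * √(1 - c ^ 2) := by ring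
    _ ≤ |t| * |c| - √(‖w‖ ^ 2 - t ^ 2) * √(1 - c ^ 2) := by gcongr
    _ ≤ |⟪w, n⟫| := by
        rw [← abs_mul]
        linarith [abs_sub_abs_le_abs_sub (t * c) ⟪w, n⟫, abs_sub_comm (t * c) ⟪w, n⟫]

variable {f : F →ₗ[ℝ] F} {u n : F} {α β : ℝ}

lemma mul_norm_le_norm_apply_of_mem_coneAround (hu : ‖u‖ = 1) (hn : ‖n‖ = 1) (hα : 0 < α)
    (hinner : ∀ v, ⟪f v, u⟫ = α * ⟪v, n⟫) {w : F} (hw : w ∈ coneAround u ⟪u, n⟫) :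
    α * |⟪u, n⟫| / 2 * ‖w‖ ≤ ‖f w‖ :=
  calc α * |⟪u, n⟫| / 2 * ‖w‖ = α * (|⟪u, n⟫| / 2 * ‖w‖) := by ring
    _ ≤ α * |⟪w, n⟫| := by gcongr; exact abs_inner_mul_norm_le_of_mem_coneAround hu hn hw
    _ = |⟪f w, u⟫| := by rw [hinner, abs_mul, abs_of_pos hα]
    _ ≤ ‖f w‖ := by simpa [hu] using abs_real_inner_le_norm (f w) u

lemma mapsTo_coneAround (hu : ‖u‖ = 1) (hn : ‖n‖ = 1) (hβ : 0 ≤ β)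
    (hβα : 4 * β < α * ⟪u, n⟫ ^ 2) (hinner : ∀ v, ⟪f v, u⟫ = α * ⟪v, n⟫)
    (hnorm : ∀ v, ‖f v‖ ^ 2 ≤ α ^ 2 * ⟪v, n⟫ ^ 2 + β ^ 2 * (‖v‖ ^ 2 - ⟪v, n⟫ ^ 2)) :
    Set.MapsTo f (coneAround u ⟪u, n⟫) (coneAround u ⟪u, n⟫) := by
  intro w hw
  set c := ⟪u, n⟫
  set m := ⟪w, n⟫
  have hm : c ^ 2 / 4 * ‖w‖ ^ 2 ≤ m ^ 2 := by
    have := pow_le_pow_left₀ (by positivity) (abs_inner_mul_norm_le_of_mem_coneAround hu hn hw) 2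
    rwa [mul_pow, div_pow, sq_abs, sq_abs, show (2 : ℝ) ^ 2 = 4 by norm_num] at this
  have hmw : m ^ 2 ≤ ‖w‖ ^ 2 := by
    simpa [hn, sq_abs] using pow_le_pow_left₀ (abs_nonneg _) (abs_real_inner_le_norm w n) 2
  have hc : c ^ 2 ≤ 1 := (sq_le_one_iff_abs_le_one c).mpr (abs_inner_le_one hu hn)
  have hβ2 : β ^ 2 ≤ (α * c ^ 2 / 4) ^ 2 := pow_le_pow_left₀ hβ (by linarith) 2
  change (1 - c ^ 2 / 4) * ‖f w‖ ^ 2 ≤ ⟪f w, u⟫ ^ 2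
  rw [hinner, mul_pow]
  calc (1 - c ^ 2 / 4) * ‖f w‖ ^ 2
      ≤ (1 - c ^ 2 / 4) * (α ^ 2 * m ^ 2 + β ^ 2 * (‖w‖ ^ 2 - m ^ 2)) := by
        gcongr
        · linarith
        · exact hnorm w
    _ ≤ α ^ 2 * m ^ 2 - c ^ 2 / 4 * α ^ 2 * m ^ 2 + β ^ 2 * ‖w‖ ^ 2 := by
        nlinarith [mul_nonneg (sq_nonneg β) (sub_nonneg.mpr hmw), sq_nonneg c, sq_nonneg α]
    _ ≤ α ^ 2 * m ^ 2 := by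
        nlinarith [mul_le_mul_of_nonneg_left hm (by positivity : 0 ≤ c ^ 2 / 4 * α ^ 2),
          mul_le_mul_of_nonneg_right hβ2 (sq_nonneg ‖w‖)]

lemma pow_le_norm_pow_apply (hu : ‖u‖ = 1) (hn : ‖n‖ = 1) (hα : 0 < α) (hβ : 0 ≤ β)
    (hβα : 4 * β < α * ⟪u, n⟫ ^ 2) (hinner : ∀ v, ⟪f v, u⟫ = α * ⟪v, n⟫)
    (hnorm : ∀ v, ‖f v‖ ^ 2 ≤ α ^ 2 * ⟪v, n⟫ ^ 2 + β ^ 2 * (‖v‖ ^ 2 - ⟪v, n⟫ ^ 2)) (k : ℕ) :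
    (α * |⟪u, n⟫| / 2) ^ k ≤ ‖(f ^ k) u‖ := by
  have hcone (j : ℕ) : (f ^ j) u ∈ coneAround u ⟪u, n⟫ := by
    rw [Module.End.pow_apply]
    exact (mapsTo_coneAround hu hn hβ hβα hinner hnorm).iterate j (mem_coneAround_self hu _)
  induction k with
  | zero => simp [hu]
  | succ k ih =>
    rw [pow_succ' f, Module.End.mul_apply, pow_succ' (α * |⟪u, n⟫| / 2)]
    calc α * |⟪u, n⟫| / 2 * (α * |⟪u, n⟫| / 2) ^ k ≤ α * |⟪u, n⟫| / 2 * ‖(f ^ k) u‖ := by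
          gcongr
      _ ≤ ‖f ((f ^ k) u)‖ := mul_norm_le_norm_apply_of_mem_coneAround hu hn hα hinner (hcone k)

end Cone

section SpectralRadius

open scoped ENNReal

lemma ofReal_le_spectralRadius_of_pow_le_norm {A : Type*} [NormedRing A] [NormedAlgebra ℂ A]
    [CompleteSpace A] {a : A} {r : ℝ} (hr : 0 ≤ r) (h : ∀ k : ℕ, r ^ k ≤ ‖a ^ k‖) :
    ENNReal.ofReal r ≤ spectralRadius ℂ a := by
  refine ge_of_tendsto (spectrum.pow_nnnorm_pow_one_div_tendsto_nhds_spectralRadius a) ?_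
  filter_upwards [eventually_ne_atTop 0] with k hk
  calc ENNReal.ofReal r = ENNReal.ofReal (r ^ k) ^ (1 / (k : ℝ)) := by
        rw [ENNReal.ofReal_pow hr, ← ENNReal.rpow_natCast, ← ENNReal.rpow_mul,
          mul_one_div_cancel (Nat.cast_ne_zero.mpr hk), ENNReal.rpow_one]
    _ ≤ (‖a ^ k‖₊ : ℝ≥0∞) ^ (1 / (k : ℝ)) := by
        gcongr
        exact ENNReal.ofReal_le_coe.mpr (h k)

variable {d : ℕ}

lemma norm_toLp_ofReal (x : Fin d → ℝ) :
    ‖(WithLp.toLp 2 fun i => (x i : ℂ) : EuclideanSpace ℂ (Fin d))‖ =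
      ‖(WithLp.toLp 2 x : E d)‖ := by
  simp [EuclideanSpace.norm_eq]

open scoped Matrix.Norms.L2Operator in
lemma norm_act_le_norm_map (g : Matrix (Fin d) (Fin d) ℝ) (v : E d) :
    ‖act g v‖ ≤ ‖g.map (algebraMap ℝ ℂ)‖ * ‖v‖ := by
  have hmap : g.map (algebraMap ℝ ℂ) *ᵥ (fun i => (v i : ℂ)) = fun i => ((g *ᵥ v.ofLp) i : ℂ) :=
    funext fun i => (RingHom.map_mulVec (algebraMap ℝ ℂ) g v.ofLp i).symm
  have h := l2_opNorm_mulVec (g.map (algebraMap ℝ ℂ)) (WithLp.toLp 2 fun i => (v i : ℂ))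
  rw [norm_toLp_ofReal, WithLp.toLp_ofLp, hmap] at h
  exact (norm_toLp_ofReal _).symm.trans_le h

open scoped Matrix.Norms.L2Operator in
lemma le_specRad_of_pow_le_norm_act {g : Matrix (Fin d) (Fin d) ℝ} {u : E d} (hu : ‖u‖ = 1)
    {r : ℝ} (hr : 0 ≤ r) (h : ∀ k : ℕ, r ^ k ≤ ‖act (g ^ k) u‖) : r ≤ specRad g := by
  set M := g.map (algebraMap ℝ ℂ)
  -- `spectrum.exists_nnnorm_eq_spectralRadius` needs a nontrivial algebra
  have : Nonempty (Fin d) := by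
    by_contra hd
    rw [not_nonempty_iff] at hd
    simp [Subsingleton.elim u 0] at hu
  have hM (k : ℕ) : r ^ k ≤ ‖M ^ k‖ :=
    (h k).trans <| (norm_act_le_norm_map _ u).trans_eq <| by rw [hu, mul_one, Matrix.map_pow]
  obtain ⟨z, hz, hzr⟩ := spectrum.exists_nnnorm_eq_spectralRadius M
  have hrz : r ≤ ‖z‖ :=
    ENNReal.ofReal_le_coe.mp (hzr ▸ ofReal_le_spectralRadius_of_pow_le_norm hr hM)
  exact hrz.trans <| le_csSup ((spectrum.isCompact M).image continuous_norm).bddAbove ⟨z, hz, rfl⟩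

end SpectralRadius

section GapDistance

lemma exists_ne_zero_inner_eq_zero {F : Type*} [NormedAddCommGroup F] [InnerProductSpace ℝ F]
    [FiniteDimensional ℝ F] (hF : 2 ≤ Module.finrank ℝ F) (n : F) :
    ∃ x : F, x ≠ 0 ∧ ⟪x, n⟫ = 0 := by
  have hK := Submodule.finrank_add_finrank_orthogonal (ℝ ∙ n)
  have hn : Module.finrank ℝ (ℝ ∙ n) ≤ 1 := by
    simpa using finrank_span_le_card ({n} : Set F)
  obtain ⟨x, hx, hx0⟩ := Submodule.exists_mem_ne_zero_of_ne_bot (p := (ℝ ∙ n)ᗮ) fun hbot => by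
    rw [hbot, finrank_bot] at hK
    omega
  rw [Submodule.mem_orthogonal_singleton_iff_inner_right, real_inner_comm] at hx
  exact ⟨x, hx0, hx⟩

variable {d : ℕ}

lemma gapDist_nonneg (v w : E d) : 0 ≤ gapDist v w := by
  unfold gapDist wedgeNorm; positivity

lemma gapDist_le_one (v w : E d) : gapDist v w ≤ 1 := by
  refine div_le_one_of_le₀ (Real.sqrt_le_iff.mpr ⟨by positivity, ?_⟩) (by positivity)
  nlinarith [sq_nonneg ⟪v, w⟫]

lemma gapDist_sub_inner_smul {u n : E d} (hu : ‖u‖ = 1) (hn : ‖n‖ = 1) (hun : ⟪u, n⟫ ^ 2 < 1) :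
    gapDist u (u - ⟪u, n⟫ • n) = |⟪u, n⟫| := by
  set c := ⟪u, n⟫
  have hx : ‖u - c • n‖ ^ 2 = 1 - c ^ 2 := by rw [norm_sub_inner_smul_sq hn, hu, one_pow]
  have hux : ⟪u, u - c • n⟫ = 1 - c ^ 2 := by
    rw [inner_sub_right, real_inner_smul_right, real_inner_self_eq_norm_sq, hu]; ring
  have hs : 0 < √(1 - c ^ 2) := Real.sqrt_pos.mpr (by linarith)
  rw [gapDist, wedgeNorm, hux, hx, hu, ← Real.sqrt_sq (norm_nonneg (u - c • n)), hx,
    show (1 : ℝ) ^ 2 * (1 - c ^ 2) - (1 - c ^ 2) ^ 2 = c ^ 2 * (1 - c ^ 2) by ring,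
    Real.sqrt_mul (sq_nonneg c), Real.sqrt_sq_eq_abs]
  field_simp

lemma sInf_gapDist_le (hd : 2 ≤ d) {u n : E d} (hu : ‖u‖ = 1) (hn : ‖n‖ = 1) :
    sInf {r | ∃ x : E d, x ≠ 0 ∧ ⟪x, n⟫ = 0 ∧ r = gapDist u x} ≤ |⟪u, n⟫| := by
  have hbdd : BddBelow {r | ∃ x : E d, x ≠ 0 ∧ ⟪x, n⟫ = 0 ∧ r = gapDist u x} :=
    ⟨0, by rintro _ ⟨x, -, -, rfl⟩; exact gapDist_nonneg u x⟩
  rcases (abs_inner_le_one hu hn).lt_or_eq with hun | hun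
  · refine csInf_le hbdd ⟨u - ⟪u, n⟫ • n, fun h0 => ?_, ?_, ?_⟩
    · have := norm_sub_inner_smul_sq hn u
      rw [h0, norm_zero, hu] at this
      nlinarith [(sq_lt_one_iff_abs_lt_one _).mpr hun]
    · rw [inner_sub_left, real_inner_smul_left, real_inner_self_eq_norm_sq, hn]; ring
    · exact (gapDist_sub_inner_smul hu hn ((sq_lt_one_iff_abs_lt_one _).mpr hun)).symm
  · obtain ⟨x, hx0, hxn⟩ := exists_ne_zero_inner_eq_zero (by simpa using hd) n
    exact (csInf_le hbdd ⟨x, hx0, hxn, rfl⟩).trans ((gapDist_le_one u x).trans_eq hun.symm)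

end GapDistance

lemma four_mul_lt_mul_sq_of_two_mul_sqrt_div_lt {a₀ a₁ b : ℝ} (ha₀ : 0 < a₀) (ha₁ : 0 ≤ a₁)
    (h : 2 * √(a₁ / a₀) < b) : 4 * a₁ < a₀ * b ^ 2 := by
  have h2 := pow_lt_pow_left₀ h (by positivity) two_ne_zero
  rw [mul_pow, Real.sq_sqrt (by positivity)] at h2
  calc 4 * a₁ = a₀ * (2 ^ 2 * (a₁ / a₀)) := by field_simp; ring
    _ < a₀ * b ^ 2 := by gcongr

/-- If the gap distance between the direction of maximum growth `u(g) = [L e₁]` and the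
hyperplane of least growth `s(g) = { w̄ : ⟪w, R* e₁⟫ = 0 }` exceeds `2 √(a₂(g)/a₁(g))`, then
`d(u(g), s(g))/2 ≤ ρ(g)/‖g‖`. -/
theorem stmt_4 {d : ℕ} (hd : 2 ≤ d) (g L R : Matrix (Fin d) (Fin d) ℝ)
    (a : Fin d → ℝ) (h : SVD g L a R)
    (hyp : 2 * Real.sqrt (a ⟨1, by omega⟩ / a ⟨0, by omega⟩) <
      sInf {r | ∃ x : E d, x ≠ 0 ∧ ⟪x, act R.transpose (stdVec ⟨0, by omega⟩)⟫ = 0 ∧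
          r = gapDist (act L (stdVec ⟨0, by omega⟩)) x}) :
    sInf {r | ∃ x : E d, x ≠ 0 ∧ ⟪x, act R.transpose (stdVec ⟨0, by omega⟩)⟫ = 0 ∧
        r = gapDist (act L (stdVec ⟨0, by omega⟩)) x} / 2 ≤
      specRad g / opNorm g := by
  set i₀ : Fin d := ⟨0, by omega⟩
  set i₁ : Fin d := ⟨1, by omega⟩
  set u := act L (stdVec i₀)
  set n := act Rᵀ (stdVec i₀)
  have hu : ‖u‖ = 1 := h.norm_act_L_stdVec i₀
  have hn : ‖n‖ = 1 := h.norm_act_R_transpose_stdVec i₀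
  have hi₀ (i : Fin d) : a i ≤ a i₀ := h.anti (Nat.zero_le i)
  have hi₁ (i : Fin d) (hi : i ≠ i₀) : a i ≤ a i₁ :=
    h.anti (Nat.one_le_iff_ne_zero.mpr fun h0 => hi (Fin.ext h0))
  have hgap := sInf_gapDist_le hd hu hn
  have hβα := four_mul_lt_mul_sq_of_two_mul_sqrt_div_lt (h.pos i₀) (h.pos i₁).le (hyp.trans_le hgap)
  rw [sq_abs] at hβα
  have hgrowth := pow_le_norm_pow_apply (f := toEuclideanLin g) hu hn (h.pos i₀) (h.pos i₁).le hβα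
    (h.inner_act_act_L_stdVec i₀) (h.norm_act_sq_le hi₁)
  have hρ : a i₀ * |⟪u, n⟫| / 2 ≤ specRad g :=
    le_specRad_of_pow_le_norm_act hu (by have := h.pos i₀; positivity)
      fun k => (hgrowth k).trans_eq (by rw [act_pow])
  rw [h.opNorm_eq hi₀, le_div_iff₀ (h.pos i₀)]
  linarith [mul_le_mul_of_nonneg_right hgap (h.pos i₀).le]
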